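/- Let n be a positive integer, let T be a bounded operator on a complex separable Hilbert space H that is an n-hypercontraction, and let M be a closed subspace of H invariant under T. Suppose there exists a unitary operator U : M → ℓ²(ℕ, ℂ) such that U (T|_M) U* = W_n, where W_n is the backward weighted shift on ℓ²(ℕ, ℂ) defined by W_n e_0 = 0 and W_n e_{i+1} = √((i+1)/(n+i)) e_i for i ≥ 0. Then P_M T|_{M⊥} = 0; that is, M⊥ is also invariant under T, so M reduces T, and T is reducible whenever {0} ≠ M ≠ H. -/

import Mathlib

/-
Put `e m := U⁻¹ (single m 1)`, an orthonormal basis of `M` on which `T` acts as `W_n`.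
Then `‖T^j e_m‖² = ∏_{i<j} (m-i)/(n+m-1-i)`, and for `m ≥ 1` this is, on `0 ≤ j ≤ n`, a constant
multiple of a polynomial of degree `n-1` in `j`; its `n`-th finite difference vanishes, so
`⟪Δ e_m, e_m⟫ = 0` for the positive defect operator `Δ = ∑ (-1)^j C(n,j) T*^j T^j`, whence
`Δ e_m = 0`. In `Δ e_{m+1} = 0` the `j = 0` term is `e_{m+1}`, and by strong induction on `m`
every other term is a multiple of `T* e_m`; so `T* e_m ∈ ℂ e_{m+1}`. Thus `T*` leaves `M`
invariant, i.e. `T` leaves `Mᗮ` invariant.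
-/

open ContinuousLinearMap Submodule

noncomputable section

/-- `T` is an `n`-hypercontraction. -/
def IsHypercontraction {H : Type*} [NormedAddCommGroup H] [InnerProductSpace ℂ H]
    [CompleteSpace H] (T : H →L[ℂ] H) (n : ℕ) : Prop :=
  ∀ k : ℕ, 1 ≤ k → k ≤ n →
    (∑ j ∈ Finset.range (k + 1), ((-1 : ℂ) ^ j * (k.choose j : ℂ)) •
      ((ContinuousLinearMap.adjoint T) ^ j * T ^ j)).IsPositive

local notation "ℓ²" => lp (fun _ : ℕ => ℂ) 2

open Finset

section

open Polynomial

theorem sum_range_alternating_choose_mul_eval_eq_zero {R : Type*} [CommRing R] {P : R[X]} {n : ℕ}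
    (hP : P.natDegree < n) :
    ∑ j ∈ range (n + 1), (-1 : R) ^ j * n.choose j * P.eval (j : R) = 0 := by
  have h := congr_fun (fwdDiff_iter_eq_zero_of_degree_lt hP) 0
  rw [fwdDiff_iter_eq_sum_shift] at h
  calc ∑ j ∈ range (n + 1), (-1 : R) ^ j * n.choose j * P.eval (j : R)
      = (-1) ^ n * ∑ j ∈ range (n + 1), ((-1 : ℤ) ^ (n - j) * n.choose j) • P.eval (0 + j • 1) := by
        rw [mul_sum]
        refine sum_congr rfl fun j hj => ?_
        have hexp : n + (n - j) = j + 2 * (n - j) := by have := mem_range.1 hj; omega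
        have hsign : (-1 : R) ^ j = (-1) ^ n * (-1) ^ (n - j) := by
          rw [← pow_add, hexp, pow_add, pow_mul]; simp
        rw [hsign, zsmul_eq_mul, zero_add, nsmul_one]
        push_cast
        ring
    _ = 0 := by rw [h, Pi.zero_apply, mul_zero]

-- `‖W_n^j e_m‖²`; for `m < j` the factor `i = m` vanishes, as does `W_n^j e_m`.
def shiftNormSq (n m j : ℕ) : ℝ := ∏ i ∈ range j, ((m : ℝ) - i) / (n + m - 1 - i)

lemma prod_range_add_sub {R : Type*} [CommRing R] (N : R) (a b : ℕ) :
    ∏ i ∈ range (a + b), (N - i) = (∏ i ∈ range a, (N - i)) * ∏ i ∈ range b, (N - a - i) := by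
  rw [prod_range_add]
  push_cast
  simp only [sub_add_eq_sub_sub]

lemma shiftNormSq_mul_prod_eq_prod_sub {n m j : ℕ} (hn : 0 < n) (hm : 0 < m) (hj : j ≤ n) :
    shiftNormSq n m j * ∏ i ∈ range (n - 1), ((n + m - 1 : ℝ) - i) =
      ∏ i ∈ range (n - 1), ((n + m - 1 : ℝ) - j - i) := by
  have hden : ∏ i ∈ range j, ((n + m - 1 : ℝ) - i) ≠ 0 := by
    refine prod_ne_zero_iff.2 fun i hi => ?_
    have : (i : ℝ) + 1 ≤ n := by exact_mod_cast (mem_range.1 hi).trans_le hj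
    have : (1 : ℝ) ≤ m := by exact_mod_cast hm
    linarith
  have hleft : (∏ i ∈ range (n - 1), ((n + m - 1 : ℝ) - i)) * ∏ i ∈ range j, ((m : ℝ) - i) =
      ∏ i ∈ range (n - 1 + j), ((n + m - 1 : ℝ) - i) := by
    rw [prod_range_add_sub, Nat.cast_pred hn]; ring_nf
  rw [shiftNormSq, prod_div_distrib, div_mul_eq_mul_div, div_eq_iff hden, mul_comm, hleft,
    add_comm, prod_range_add_sub, mul_comm]

theorem sum_alternating_choose_mul_shiftNormSq {n m : ℕ} (hn : 0 < n) (hm : 0 < m) :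
    ∑ j ∈ range (n + 1), (-1 : ℝ) ^ j * n.choose j * shiftNormSq n m j = 0 := by
  set P : ℝ[X] := ∏ i ∈ range (n - 1), (C ((n + m - 1 : ℝ) - i) - X)
  have hP : P.natDegree < n := by
    refine (natDegree_prod_le _ _).trans_lt ?_
    calc ∑ i ∈ range (n - 1), (C ((n + m - 1 : ℝ) - i) - X).natDegree
        ≤ ∑ i ∈ range (n - 1), 1 := by
          refine sum_le_sum fun i _ => ?_
          rw [← neg_sub, natDegree_neg]
          exact natDegree_X_sub_C_le _
      _ < n := by rw [sum_const, card_range, smul_eq_mul, mul_one]; omega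
  have hP0 : P.eval 0 ≠ 0 := by
    simp only [P, eval_prod, eval_sub, eval_C, eval_X, sub_zero]
    refine prod_ne_zero_iff.2 fun i hi => ?_
    have : (i : ℝ) + 2 ≤ n := by exact_mod_cast (by have := mem_range.1 hi; omega : i + 2 ≤ n)
    have : (1 : ℝ) ≤ m := by exact_mod_cast hm
    linarith
  rw [← mul_left_inj' hP0, zero_mul, sum_mul]
  refine Eq.trans (sum_congr rfl fun j hj => ?_) (sum_range_alternating_choose_mul_eval_eq_zero hP)
  simp only [P, eval_prod, eval_sub, eval_C, eval_X, sub_zero, mul_assoc]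
  rw [shiftNormSq_mul_prod_eq_prod_sub hn hm (Nat.lt_succ_iff.1 (mem_range.1 hj))]
  simp only [sub_right_comm]

end

namespace ContinuousLinearMap

variable {𝕜 E : Type*} [Field 𝕜] [AddCommGroup E] [Module 𝕜 E] [TopologicalSpace E]
  {T S : E →L[𝕜] E} {e : ℕ → E}

lemma apply_mem_span_singleton_of_mem {x y z : E} (hx : x ∈ 𝕜 ∙ y) (hy : S y ∈ 𝕜 ∙ z) :
    S x ∈ 𝕜 ∙ z := by
  obtain ⟨a, rfl⟩ := mem_span_singleton.1 hx
  rw [map_smul]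
  exact smul_mem _ a hy

lemma pow_apply_add_mem_span_singleton (hT : ∀ m, T (e (m + 1)) ∈ 𝕜 ∙ e m) (j k : ℕ) :
    (T ^ j) (e (k + j)) ∈ 𝕜 ∙ e k := by
  induction j generalizing k with
  | zero => exact mem_span_singleton_self _
  | succ j ih =>
    rw [pow_succ, mul_apply_eq_comp, ← add_assoc]
    exact apply_mem_span_singleton_of_mem (hT (k + j)) (ih k)

lemma pow_apply_eq_zero_of_lt (h0 : T (e 0) = 0) (hT : ∀ m, T (e (m + 1)) ∈ 𝕜 ∙ e m) {j m : ℕ}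
    (hmj : m < j) : (T ^ j) (e m) = 0 := by
  obtain ⟨i, rfl⟩ := Nat.exists_eq_add_of_lt hmj
  have hm : (T ^ m) (e (0 + m)) ∈ 𝕜 ∙ e 0 := pow_apply_add_mem_span_singleton hT m 0
  rw [zero_add] at hm
  have h1 : (T ^ (m + 1)) (e m) = 0 := by
    rw [pow_succ', mul_apply_eq_comp, ← mem_bot 𝕜, ← span_singleton_eq_bot.2 h0]
    exact apply_mem_span_singleton_of_mem hm (mem_span_singleton_self _)
  rw [show m + i + 1 = i + (m + 1) by omega, pow_add, mul_apply_eq_comp, h1, map_zero]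

theorem apply_mem_span_singleton_succ_of_sum_eq_zero {n : ℕ} {a : ℕ → 𝕜} (ha : a 0 = 1)
    (h0 : T (e 0) = 0) (hT : ∀ m, T (e (m + 1)) ∈ 𝕜 ∙ e m) (he : ∀ m, e m ≠ 0)
    (hdefect : ∀ m, 0 < m → ∑ j ∈ range (n + 1), a j • (S ^ j) ((T ^ j) (e m)) = 0) (m : ℕ) :
    S (e m) ∈ 𝕜 ∙ e (m + 1) := by
  induction m using Nat.strong_induction_on with
  | _ m ih =>
  have hiter : ∀ i k, k + i ≤ m → (S ^ i) (e k) ∈ 𝕜 ∙ e (k + i) := by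
    intro i
    induction i with
    | zero => exact fun k _ => mem_span_singleton_self _
    | succ i ihi =>
      intro k hk
      rw [pow_succ', mul_apply_eq_comp, ← add_assoc]
      exact apply_mem_span_singleton_of_mem (ihi k (by omega)) (ih (k + i) (by omega))
  have hterm : ∀ j, (S ^ (j + 1)) ((T ^ (j + 1)) (e (m + 1))) ∈ 𝕜 ∙ S (e m) := by
    intro j
    rcases le_or_gt (j + 1) (m + 1) with hj | hj
    · obtain ⟨k, hk⟩ : ∃ k, m + 1 = k + (j + 1) := ⟨m - j, by omega⟩
      have hSj : (S ^ j) ((T ^ (j + 1)) (e (m + 1))) ∈ 𝕜 ∙ e m := by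
        rw [hk]
        refine apply_mem_span_singleton_of_mem (pow_apply_add_mem_span_singleton hT _ k) ?_
        have hkj : k + j = m := by omega
        exact hkj ▸ hiter j k (by omega)
      rw [pow_succ', mul_apply_eq_comp]
      exact apply_mem_span_singleton_of_mem hSj (mem_span_singleton_self _)
    · rw [pow_apply_eq_zero_of_lt h0 hT hj, map_zero]
      exact zero_mem _
  have hsum := hdefect (m + 1) m.succ_pos
  rw [sum_range_succ', ha, pow_zero, pow_zero, one_apply_eq_self, one_apply_eq_self,
    one_smul] at hsum
  have hmem : e (m + 1) ∈ 𝕜 ∙ S (e m) := by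
    rw [eq_neg_of_add_eq_zero_right hsum]
    exact neg_mem (sum_mem fun j _ => smul_mem _ _ (hterm j))
  obtain ⟨c, hc⟩ := mem_span_singleton.1 hmem
  have hc0 : c ≠ 0 := by
    rintro rfl
    exact he (m + 1) (by rw [← hc, zero_smul])
  exact mem_span_singleton.2 ⟨c⁻¹, by rw [← hc, smul_smul, inv_mul_cancel₀ hc0, one_smul]⟩

end ContinuousLinearMap

theorem norm_pow_apply_sq_eq_shiftNormSq {E : Type*} [NormedAddCommGroup E] [NormedSpace ℂ E]
    {T : E →L[ℂ] E} {e : ℕ → E} (n : ℕ) (he : ∀ m, ‖e m‖ = 1) (h0 : T (e 0) = 0)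
    (hT : ∀ m : ℕ, T (e (m + 1)) = (Real.sqrt ((m + 1) / (n + m)) : ℂ) • e m) (j m : ℕ) :
    ‖(T ^ j) (e m)‖ ^ 2 = shiftNormSq n m j := by
  induction j generalizing m with
  | zero => simp [he, shiftNormSq]
  | succ j ih =>
    rw [pow_succ T, mul_apply_eq_comp, shiftNormSq, prod_range_succ']
    cases m with
    | zero => simp [h0]
    | succ m =>
      rw [hT, map_smul, norm_smul, mul_pow, ih, Complex.norm_real, Real.norm_eq_abs, sq_abs,
        Real.sq_sqrt (by positivity), shiftNormSq, mul_comm]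
      push_cast
      congr 1
      · exact prod_congr rfl fun i _ => by ring_nf
      · ring_nf

section Hilbert

variable {H : Type*} [NormedAddCommGroup H] [InnerProductSpace ℂ H] [CompleteSpace H]

def hypercontractionDefect (T : H →L[ℂ] H) (k : ℕ) : H →L[ℂ] H :=
  ∑ j ∈ range (k + 1), ((-1 : ℂ) ^ j * (k.choose j : ℂ)) • (adjoint T ^ j * T ^ j)

lemma hypercontractionDefect_apply (T : H →L[ℂ] H) (k : ℕ) (x : H) :
    hypercontractionDefect T k x =
      ∑ j ∈ range (k + 1), ((-1 : ℂ) ^ j * (k.choose j : ℂ)) • (adjoint T ^ j) ((T ^ j) x) := by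
  simp only [hypercontractionDefect, _root_.sum_apply, smul_apply, mul_apply_eq_comp]

lemma inner_hypercontractionDefect_apply_self (T : H →L[ℂ] H) (k : ℕ) (x : H) :
    inner ℂ (hypercontractionDefect T k x) x =
      ∑ j ∈ range (k + 1), (-1 : ℂ) ^ j * k.choose j * ((‖(T ^ j) x‖ ^ 2 : ℝ) : ℂ) := by
  rw [hypercontractionDefect_apply, sum_inner]
  refine sum_congr rfl fun j _ => ?_
  rw [inner_smul_left, ← star_eq_adjoint, ← star_pow, star_eq_adjoint, adjoint_inner_left,
    inner_self_eq_norm_sq_to_K]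
  simp

-- `⟪P x, x⟫ = ‖√P x‖²`.
lemma ContinuousLinearMap.IsPositive.apply_eq_zero_of_inner_eq_zero {P : H →L[ℂ] H}
    (hP : P.IsPositive) {x : H} (hx : inner ℂ (P x) x = 0) : P x = 0 := by
  have hP0 : 0 ≤ P := (nonneg_iff_isPositive P).2 hP
  set R := CFC.sqrt P
  have hRR : R * R = P := CFC.sqrt_mul_sqrt_self P hP0
  have hR : IsSelfAdjoint R := (CFC.sqrt_nonneg P).isSelfAdjoint
  have hRx : R x = 0 := by
    rw [← inner_self_eq_zero (𝕜 := ℂ), ← adjoint_inner_left, hR.adjoint_eq, ← mul_apply_eq_comp,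
      hRR, hx]
  rw [← hRR, mul_apply_eq_comp, hRx, map_zero]

theorem IsHypercontraction.adjoint_apply_mem_span_singleton_succ {T : H →L[ℂ] H} {n : ℕ}
    (hn : 0 < n) (hT : IsHypercontraction T n) {e : ℕ → H} (he : ∀ m, ‖e m‖ = 1)
    (h0 : T (e 0) = 0) (hsucc : ∀ m : ℕ, T (e (m + 1)) = (Real.sqrt ((m + 1) / (n + m)) : ℂ) • e m)
    (m : ℕ) : adjoint T (e m) ∈ ℂ ∙ e (m + 1) := by
  have hpos : (hypercontractionDefect T n).IsPositive := hT n hn le_rfl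
  have hdefect : ∀ m, 0 < m → hypercontractionDefect T n (e m) = 0 := fun m hm => by
    refine hpos.apply_eq_zero_of_inner_eq_zero ?_
    simp only [inner_hypercontractionDefect_apply_self,
      norm_pow_apply_sq_eq_shiftNormSq n he h0 hsucc]
    exact_mod_cast sum_alternating_choose_mul_shiftNormSq hn hm
  refine apply_mem_span_singleton_succ_of_sum_eq_zero (n := n)
    (a := fun j => (-1 : ℂ) ^ j * n.choose j) (by simp) h0 (fun m => ?_) (fun m => ?_)
    (fun m hm => ?_) m
  · rw [hsucc]
    exact smul_mem _ _ (mem_span_singleton_self _)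
  · simp [← norm_pos_iff, he]
  · rw [← hypercontractionDefect_apply, hdefect m hm]

end Hilbert

lemma HilbertBasis.forall_apply_mem_of_apply_mem {𝕜 E ι : Type*} [RCLike 𝕜]
    [NormedAddCommGroup E] [InnerProductSpace 𝕜 E] {M : Submodule 𝕜 E} [CompleteSpace M]
    (b : HilbertBasis ι 𝕜 M) (S : E →L[𝕜] E) (hS : ∀ i, S (b i) ∈ M) : ∀ x ∈ M, S x ∈ M := by
  intro x hx
  have hM : IsClosed (M : Set E) := (completeSpace_coe_iff_isComplete.1 ‹_›).isClosed
  let f : M →L[𝕜] E := S.comp M.subtypeL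
  have hle : (span 𝕜 (Set.range b)).topologicalClosure ≤ M.comap (f : M →ₗ[𝕜] E) :=
    topologicalClosure_minimal _ (span_le.2 (by rintro _ ⟨i, rfl⟩; exact hS i))
      (by rw [comap_coe]; exact hM.preimage f.continuous)
  rw [b.dense_span] at hle
  exact hle (mem_top (x := ⟨x, hx⟩))

theorem stmt_13_general {H : Type*} [NormedAddCommGroup H] [InnerProductSpace ℂ H]
    [CompleteSpace H]
    (n : ℕ) (hn : 0 < n)
    (T : H →L[ℂ] H) (hhyp : IsHypercontraction T n)
    (M : Submodule ℂ H) [CompleteSpace M]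
    (hinv : ∀ x ∈ M, T x ∈ M)
    (W : ℓ² →L[ℂ] ℓ²)
    (hW0 : W (lp.single 2 0 1) = 0)
    (hW : ∀ i : ℕ, W (lp.single 2 (i + 1) 1) =
      (Real.sqrt ((i + 1) / (n + i)) : ℂ) • lp.single 2 i 1)
    (U : M ≃ₗᵢ[ℂ] ℓ²)
    (hU : ∀ x : M, U ((orthogonalProjection M).comp (T.comp M.subtypeL) x) = W (U x)) :
    (orthogonalProjection M).comp (T.comp Mᗮ.subtypeL) = 0 ∧
    (∀ x ∈ Mᗮ, T x ∈ Mᗮ) ∧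
    (M ≠ ⊥ → M ≠ ⊤ →
      ∃ N : Submodule ℂ H, IsClosed (N : Set H) ∧ N ≠ ⊥ ∧ N ≠ ⊤ ∧
        (∀ x ∈ N, T x ∈ N) ∧ (∀ x ∈ N, ContinuousLinearMap.adjoint T x ∈ N)) := by
  let b : HilbertBasis ℕ ℂ M := HilbertBasis.ofRepr U
  have hTe : ∀ m, T (b m) = ((U.symm (W (lp.single 2 m 1)) : M) : H) := fun m => by
    rw [← b.repr_self m, ← hU, U.symm_apply_apply, comp_apply, comp_apply, subtypeL_apply,
      ← starProjection_apply, starProjection_eq_self_iff.2 (hinv _ (b m).2)]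
  have h0 : T (b 0) = 0 := by rw [hTe, hW0, map_zero, ZeroMemClass.coe_zero]
  have hsucc : ∀ m : ℕ, T (b (m + 1)) = (Real.sqrt ((m + 1) / (n + m)) : ℂ) • (b m : H) :=
    fun m => by rw [hTe, hW, map_smul, b.repr_symm_single, Submodule.coe_smul]
  have hadj : ∀ m, adjoint T (b m) ∈ M := fun m =>
    (span_singleton_le_iff_mem _ _).2 (b (m + 1)).2 <|
      hhyp.adjoint_apply_mem_span_singleton_succ hn (fun m => b.orthonormal.1 m) h0 hsucc m
  have hadjM : ∀ x ∈ M, adjoint T x ∈ M := b.forall_apply_mem_of_apply_mem _ hadj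
  have hperp : ∀ x ∈ Mᗮ, T x ∈ Mᗮ :=
    (Module.End.mem_invtSubmodule_iff_forall_mem_of_mem _).1 <| orthogonal_mem_invtSubmodule <|
      (Module.End.mem_invtSubmodule_iff_forall_mem_of_mem _).2 hadjM
  refine ⟨?_, hperp, fun hbot htop => ⟨M, ?_, hbot, htop, hinv, hadjM⟩⟩
  · refine ContinuousLinearMap.ext fun x => ?_
    rw [comp_apply, comp_apply, subtypeL_apply, zero_apply]
    exact orthogonalProjectionOnto_apply_of_mem_orthogonal (hperp _ x.2)
  · exact (completeSpace_coe_iff_isComplete.1 ‹_›).isClosed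

theorem stmt_13 {H : Type*} [NormedAddCommGroup H] [InnerProductSpace ℂ H]
    [CompleteSpace H] [TopologicalSpace.SeparableSpace H]
    (n : ℕ) (hn : 0 < n)
    (T : H →L[ℂ] H) (hhyp : IsHypercontraction T n)
    (M : Submodule ℂ H) [CompleteSpace M]
    (hinv : ∀ x ∈ M, T x ∈ M)
    (W : ℓ² →L[ℂ] ℓ²)
    (hW0 : W (lp.single 2 0 1) = 0)
    (hW : ∀ i : ℕ, W (lp.single 2 (i + 1) 1) =
      (Real.sqrt ((i + 1) / (n + i)) : ℂ) • lp.single 2 i 1)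
    (U : M ≃ₗᵢ[ℂ] ℓ²)
    (hU : ∀ x : M, U ((orthogonalProjection M).comp (T.comp M.subtypeL) x) = W (U x)) :
    (orthogonalProjection M).comp (T.comp Mᗮ.subtypeL) = 0 ∧
    (∀ x ∈ Mᗮ, T x ∈ Mᗮ) ∧
    (M ≠ ⊥ → M ≠ ⊤ →
      ∃ N : Submodule ℂ H, IsClosed (N : Set H) ∧ N ≠ ⊥ ∧ N ≠ ⊤ ∧
        (∀ x ∈ N, T x ∈ N) ∧ (∀ x ∈ N, ContinuousLinearMap.adjoint T x ∈ N)) :=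
  stmt_13_general n hn T hhyp M hinv W hW0 hW U hU
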